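/- Let X be a real normed space and let a, b ∈ X be nonzero vectors. Then δ_X( ‖ a/‖a‖ − b/‖b‖ ‖ ) ≤ (1/2)·(1/‖a‖ + 1/‖b‖)·( ‖a‖ + ‖b‖ − ‖a+b‖ ), where δ_X is the modulus of convexity of X. -/
import Mathlib


/-- The modulus of convexity of a normed space `X`:
`δ_X(ε) = inf { 1 − ‖u+v‖/2 : ‖u‖ ≤ 1, ‖v‖ ≤ 1, ‖u−v‖ ≥ ε }`. -/
noncomputable def modulusOfConvexity (X : Type*) [NormedAddCommGroup X]
    [NormedSpace ℝ X] (ε : ℝ) : ℝ :=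
  sInf {t : ℝ | ∃ u v : X, ‖u‖ ≤ 1 ∧ ‖v‖ ≤ 1 ∧ ε ≤ ‖u - v‖ ∧ t = 1 - ‖u + v‖ / 2}

/-- For nonzero `a, b` in a real normed space `X`:
`δ_X(‖a/‖a‖ − b/‖b‖‖) ≤ (1/2)·(1/‖a‖ + 1/‖b‖)·(‖a‖ + ‖b‖ − ‖a+b‖)`. -/
theorem stmt13 {X : Type*} [NormedAddCommGroup X] [NormedSpace ℝ X]
    (a b : X) (ha : a ≠ 0) (hb : b ≠ 0) :
    modulusOfConvexity X ‖‖a‖⁻¹ • a - ‖b‖⁻¹ • b‖ ≤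
      (1 / 2) * (1 / ‖a‖ + 1 / ‖b‖) * (‖a‖ + ‖b‖ - ‖a + b‖) := by
  wlog h : ‖a‖ ≤ ‖b‖ with H
  · have := H b a hb ha (le_of_not_ge h)
    calc modulusOfConvexity X ‖‖a‖⁻¹ • a - ‖b‖⁻¹ • b‖
        = modulusOfConvexity X ‖‖b‖⁻¹ • b - ‖a‖⁻¹ • a‖ := by rw [norm_sub_rev]
      _ ≤ (1 / 2) * (1 / ‖b‖ + 1 / ‖a‖) * (‖b‖ + ‖a‖ - ‖b + a‖) := this
      _ = (1 / 2) * (1 / ‖a‖ + 1 / ‖b‖) * (‖a‖ + ‖b‖ - ‖a + b‖) := by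
          rw [add_comm b a]; ring
  set α := ‖a‖ with hα
  set β := ‖b‖ with hβ
  have hαpos : 0 < α := norm_pos_iff.mpr ha
  have hβpos : 0 < β := norm_pos_iff.mpr hb
  set u : X := α⁻¹ • a with hu
  set v : X := β⁻¹ • b with hv
  have hnu : ‖u‖ = 1 := by
    rw [hu, norm_smul, Real.norm_eq_abs, abs_of_pos (inv_pos.mpr hαpos), ← hα,
      inv_mul_cancel₀ hαpos.ne']
  have hnv : ‖v‖ = 1 := by
    rw [hv, norm_smul, Real.norm_eq_abs, abs_of_pos (inv_pos.mpr hβpos), ← hβ,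
      inv_mul_cancel₀ hβpos.ne']
  have hmem : (1 - ‖u + v‖ / 2) ∈
      {t : ℝ | ∃ u' v' : X, ‖u'‖ ≤ 1 ∧ ‖v'‖ ≤ 1 ∧ ‖u - v‖ ≤ ‖u' - v'‖ ∧
        t = 1 - ‖u' + v'‖ / 2} :=
    ⟨u, v, hnu.le, hnv.le, le_refl _, rfl⟩
  have hbdd : BddBelow {t : ℝ | ∃ u' v' : X, ‖u'‖ ≤ 1 ∧ ‖v'‖ ≤ 1 ∧
      ‖u - v‖ ≤ ‖u' - v'‖ ∧ t = 1 - ‖u' + v'‖ / 2} := by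
    refine ⟨0, fun t ht => ?_⟩
    obtain ⟨u', v', hu', hv', _, rfl⟩ := ht
    have := norm_add_le u' v'
    linarith
  have h1 : modulusOfConvexity X ‖u - v‖ ≤ 1 - ‖u + v‖ / 2 := csInf_le hbdd hmem
  refine h1.trans ?_
  -- key lower bound on ‖u + v‖
  have hdecomp : u + v = α⁻¹ • (a + b) + (β⁻¹ - α⁻¹) • b := by
    rw [hu, hv, smul_add, sub_smul]; abel
  have hnb : ‖(β⁻¹ - α⁻¹) • b‖ = β * (α⁻¹ - β⁻¹) := by
    rw [norm_smul, Real.norm_eq_abs, abs_of_nonpos (by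
      simp only [sub_nonpos]; exact inv_anti₀ hαpos h), ← hβ]
    ring
  have hna : ‖α⁻¹ • (a + b)‖ = α⁻¹ * ‖a + b‖ := by
    rw [norm_smul, Real.norm_eq_abs, abs_of_pos (inv_pos.mpr hαpos)]
  have hlow : α⁻¹ * ‖a + b‖ - β * (α⁻¹ - β⁻¹) ≤ ‖u + v‖ := by
    calc α⁻¹ * ‖a + b‖ - β * (α⁻¹ - β⁻¹)
        = ‖α⁻¹ • (a + b)‖ - ‖(β⁻¹ - α⁻¹) • b‖ := by rw [hna, hnb]
      _ ≤ ‖α⁻¹ • (a + b) + (β⁻¹ - α⁻¹) • b‖ := by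
          have := norm_add_le (α⁻¹ • (a + b) + (β⁻¹ - α⁻¹) • b) (-(β⁻¹ - α⁻¹) • b)
          simp only [neg_smul, add_neg_cancel_right] at this
          rw [norm_neg] at this
          linarith
      _ = ‖u + v‖ := by rw [← hdecomp]
  have hab : ‖a + b‖ ≤ α + β := norm_add_le a b
  have habnn : 0 ≤ ‖a + b‖ := norm_nonneg _
  have hαβ : α⁻¹ * α = 1 := inv_mul_cancel₀ hαpos.ne'
  have hββ : β⁻¹ * β = 1 := inv_mul_cancel₀ hβpos.ne'
  have hlow' : ‖a + b‖ - β + α ≤ α * ‖u + v‖ := by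
    have he : α * (α⁻¹ * ‖a + b‖ - β * (α⁻¹ - β⁻¹)) = ‖a + b‖ - β + α := by
      field_simp
      ring
    have := mul_le_mul_of_nonneg_left hlow hαpos.le
    linarith [he ▸ this]
  have hrw : (1 / 2) * (1 / α + 1 / β) * (α + β - ‖a + b‖)
      = (α + β) * (α + β - ‖a + b‖) / (2 * α * β) := by
    field_simp
    ring
  rw [hrw, le_div_iff₀ (by positivity)]
  nlinarith [mul_le_mul_of_nonneg_left hlow' hβpos.le,
    mul_nonneg hαpos.le (sub_nonneg.mpr hab)]
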